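/- Given a symmetric representation π of a symmetric game network and an ≡_0-realisable strategy σ_0 for player 0, the strategy profile σ defined by σ_i(ρ) = σ_0(ρ(π_{i,0}⁻¹)) is symmetric: each σ_i is ≡_i-realisable and σ_i(ρ) = σ_j(ρ(π_{i,j}⁻¹)) for all i,j and histories ρ. -/
import Mathlib


/-- Given a symmetric representation `π` and an `≡₀`-realisable strategy `σ0` for
player `0`, the profile defined by `σ i ρ = σ0 (ρ(π i 0)⁻¹)` is symmetric:
each `σ i` is `≡ i`-realisable and `σ i ρ = σ j (ρ(π i j)⁻¹)`. -/
theorem stmt4 {S Act : Type*} (n : ℕ) [NeZero n]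
    (E : Fin n → (Fin n → S) → (Fin n → S) → Prop)
    (hE : ∀ i, Equivalence (E i))
    (π : Fin n → Fin n → Equiv.Perm (Fin n))
    (hπ : ∀ i j, π i j i = j)
    (hid : ∀ i, π i i = 1)
    (hcomp : ∀ i j k, π k j * π i k = π i j)
    (hobs : ∀ i j (t t' : Fin n → S),
      E i t t' ↔ E j (t ∘ ⇑(π i j)⁻¹) (t' ∘ ⇑(π i j)⁻¹))
    (σ0 : List (Fin n → S) → Act)
    (hreal0 : ∀ ρ ρ' : List (Fin n → S), List.Forall₂ (E 0) ρ ρ' → σ0 ρ = σ0 ρ')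
    (σ : Fin n → List (Fin n → S) → Act)
    (hσ : ∀ i ρ, σ i ρ = σ0 (ρ.map (fun u => u ∘ ⇑(π i 0)⁻¹))) :
    (∀ i (ρ ρ' : List (Fin n → S)), List.Forall₂ (E i) ρ ρ' → σ i ρ = σ i ρ') ∧
    (∀ i j (ρ : List (Fin n → S)), σ i ρ = σ j (ρ.map (fun u => u ∘ ⇑(π i j)⁻¹))) := by
  constructor
  · intro i ρ ρ' h
    rw [hσ, hσ]
    apply hreal0
    rw [List.forall₂_map_right_iff, List.forall₂_map_left_iff]
    refine h.imp ?_
    intro t t' ht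
    exact (hobs i 0 t t').mp ht
  · intro i j ρ
    rw [hσ, hσ, List.map_map]
    congr 1
    apply List.map_congr_left
    intro u _
    show u ∘ ⇑(π i 0)⁻¹ = (u ∘ ⇑(π i j)⁻¹) ∘ ⇑(π j 0)⁻¹
    rw [Function.comp_assoc, ← Equiv.Perm.coe_mul, ← mul_inv_rev, hcomp i 0 j]
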